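/- Let V be a finite-dimensional F-vector space with a distinguished basis B, let f: V → F be the linear functional sending every basis element to 1, and let W_1 ⊆ V⊗V be a subspace. In V* ⊗ V*, the annihilator identity holds: if R⊥ = M + V*f for subspaces M, V*f of (V⊗V)*, then for any k ≥ 2, (⋂_{i=0}^{k−2} V^{⊗i} ⊗ R ⊗ V^{⊗(k−i−2)}) = (⋂_{i=0}^{k−2} V^{⊗i} ⊗ M⊥ ⊗ V^{⊗(k−i−2)}) ∩ (⋂_{i=0}^{k−2} ker(I^{⊗(i+1)} ⊗ f ⊗ I^{⊗(k−i−2)})), where R = M⊥ ∩ (V ⊗ ker f). -/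

import Mathlib

noncomputable section

/-- A layered directed graph: vertices come with a rank (layer), and each
edge goes from a vertex of rank `j+1` to a vertex of rank `j`. -/
structure LayeredGraph where
  V : Type
  E : Type
  rank : V → ℕ
  tail : E → V
  head : E → V
  rank_tail : ∀ e, rank (tail e) = rank (head e) + 1

namespace LayeredGraph

variable (G : LayeredGraph)

/-- `V₀ = {*}`: there is a unique vertex of rank `0`. -/
def HasUniqueMin : Prop := ∃ s : G.V, G.rank s = 0 ∧ ∀ v, G.rank v = 0 → v = s

/-- Every vertex of `V⁺` has at least one outgoing edge. -/
def EdgeFull : Prop := ∀ v, G.rank v ≠ 0 → ∃ e, G.tail e = v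

/-- `u` covers `w`: there is an edge from `u` to `w`. -/
def adj (u w : G.V) : Prop := ∃ e, G.tail e = u ∧ G.head e = w

/-- `v ≥ u` with a prescribed rank drop `j` (this is `u ∈ S_j(v)`;
for `j = 0` it forces `u = v`). -/
def SRel (v u : G.V) (j : ℕ) : Prop :=
  Relation.ReflTransGen G.adj v u ∧ G.rank u + j = G.rank v

/-- A uniform layered graph: for each vertex `v` of rank `≥ 2`, all elements of
`S₁(v)` are equivalent under the equivalence relation generated by
`u ∼ w ↔ S₁(u) ∩ S₁(w) ≠ ∅`. -/
def Uniform : Prop := ∀ v u w, 2 ≤ G.rank v → G.adj v u → G.adj v w →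
  Relation.EqvGen (fun a b => G.adj v a ∧ G.adj v b ∧ ∃ x, G.adj a x ∧ G.adj b x) u w

/-- A (nonempty) directed path: a nonempty list of composable edges. -/
def IsPathList (l : List G.E) : Prop :=
  l ≠ [] ∧ l.Chain' (fun e f => G.head e = G.tail f)

/-- The tail (initial vertex) of a path, as an `Option`. -/
def firstV (l : List G.E) : Option G.V := l.head?.map G.tail

/-- The head (final vertex) of a path, as an `Option`. -/
def lastV (l : List G.E) : Option G.V := l.getLast?.map G.head

/-- The list `v₀, v₁, …, v_m` of vertices visited by a path. -/
def pathVerts (l : List G.E) : List G.V :=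
  match l with
  | [] => []
  | e :: _ => G.tail e :: l.map G.head

/-- The type `V⁺` of vertices of positive rank. -/
def Vp := {v : G.V // G.rank v ≠ 0}

variable (F : Type) [Field F]

/-- The coefficient `e(π,k)` of `t^k` in `P_π(t) = (1 - te₁)⋯(1 - te_m)`,
an element of the tensor algebra `T(E)` (modelled as the free algebra on `E`). -/
def ecoef (π : List G.E) (k : ℕ) : FreeAlgebra F G.E :=
  ((-1 : F) ^ k) • ((π.sublistsLen k).map fun l => (l.map (FreeAlgebra.ι F)).prod).sum

/-- The two-sided ideal generated by a set, as a submodule. -/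
def twoSidedSpan {A : Type} [Ring A] [Algebra F A] (S : Set A) : Submodule F A :=
  Submodule.span F {x | ∃ a s b, s ∈ S ∧ x = a * s * b}

/-- The defining ideal `R` of `A(Γ)`, generated by the differences
`e(π₁,k) - e(π₂,k)` over pairs of paths with the same tail and the same head. -/
def Rideal : Submodule F (FreeAlgebra F G.E) :=
  twoSidedSpan F {x | ∃ π₁ π₂ k, G.IsPathList π₁ ∧ G.IsPathList π₂ ∧
    G.firstV π₁ = G.firstV π₂ ∧ G.lastV π₁ = G.lastV π₂ ∧
    1 ≤ k ∧ k ≤ π₁.length ∧ x = G.ecoef F π₁ k - G.ecoef F π₂ k}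

/-- A vertex viewed in `T(V⁺)` (the free algebra on `V⁺`), with `*` sent to `0`. -/
def vert (v : G.V) : FreeAlgebra F G.Vp :=
  if h : G.rank v = 0 then 0 else FreeAlgebra.ι F (⟨v, h⟩ : G.Vp)

/-- The algebra homomorphism `θ : T(E) → T(V⁺)`, induced by `e ↦ t(e) - h(e)`. -/
def theta : FreeAlgebra F G.E →ₐ[F] FreeAlgebra F G.Vp :=
  FreeAlgebra.lift F fun e => G.vert F (G.tail e) - G.vert F (G.head e)

/-- The filtration `T(E)_i` of `T(E)`, where an edge `e` has degree `|t(e)|`. -/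
def filtE (i : ℕ) : Submodule F (FreeAlgebra F G.E) :=
  Submodule.span F {x | ∃ l : List G.E, (l.map fun e => G.rank (G.tail e)).sum ≤ i ∧
    x = (l.map (FreeAlgebra.ι F)).prod}

/-- The homogeneous component `T(V⁺)_[i]` of `T(V⁺)`,
where a vertex has degree equal to its rank. -/
def homogV (i : ℕ) : Submodule F (FreeAlgebra F G.Vp) :=
  Submodule.span F {x | ∃ l : List G.Vp, (l.map fun p => G.rank p.1).sum = i ∧
    x = (l.map (FreeAlgebra.ι F)).prod}

/-- The filtration `T(V⁺)_i` of `T(V⁺)` induced by the vertex grading. -/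
def filtV (i : ℕ) : Submodule F (FreeAlgebra F G.Vp) :=
  Submodule.span F {x | ∃ l : List G.Vp, (l.map fun p => G.rank p.1).sum ≤ i ∧
    x = (l.map (FreeAlgebra.ι F)).prod}

/-- The associated graded ideal `gr I` of an ideal `I ⊆ T(V⁺)`: its degree-`k`
component is `T(V⁺)_[k] ∩ (T(V⁺)_{k-1} + I)`. -/
def grIdeal (I : Submodule F (FreeAlgebra F G.Vp)) : Submodule F (FreeAlgebra F G.Vp) :=
  ⨆ k, G.homogV F k ⊓ ((⨆ j, ⨆ _ : j < k, G.homogV F j) ⊔ I)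

/-- The monomial `v(π,k) = v₀v₁⋯v_{k-1} ∈ T(V⁺)` attached to a path `π`. -/
def vmon (π : List G.E) (k : ℕ) : FreeAlgebra F G.Vp :=
  (((G.pathVerts π).take k).map (G.vert F)).prod

/-- The ideal `R_gr ⊆ T(V⁺)`, generated by the differences `v(π₁,k) - v(π₂,k)`
over pairs of paths with common tail. -/
def Rgr : Submodule F (FreeAlgebra F G.Vp) :=
  twoSidedSpan F {x | ∃ π₁ π₂ k, G.IsPathList π₁ ∧ G.IsPathList π₂ ∧
    G.firstV π₁ = G.firstV π₂ ∧ 2 ≤ k ∧ k ≤ π₁.length ∧ k ≤ π₂.length ∧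
    x = G.vmon F π₁ k - G.vmon F π₂ k}

/-- The degree-one subspace `V = F·V⁺ ⊆ T(V⁺)`. -/
def Wone : Submodule F (FreeAlgebra F G.Vp) :=
  Submodule.span F (Set.range (FreeAlgebra.ι F))

/-- The quadratic relation space `R` of `gr A(Γ)`,
spanned by the elements `v(u - w)` with `u, w ∈ S₁(v)`. -/
def Rquad : Submodule F (FreeAlgebra F G.Vp) :=
  Submodule.span F {x | ∃ v u w, G.adj v u ∧ G.adj v w ∧
    x = G.vert F v * (G.vert F u - G.vert F w)}

/-- `S_j(v) = span{u : v > u, |u| = |v| - j}` (with `S₀(v) = span{v}`). -/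
def Sspan (j : ℕ) (v : G.V) : Submodule F (FreeAlgebra F G.Vp) :=
  Submodule.span F {x | ∃ u, G.SRel v u j ∧ x = G.vert F u}

/-- `P_j(v) = span{u - w : v > u, v > w, |u| = |w| = |v| - j}`. -/
def Pspan (j : ℕ) (v : G.V) : Submodule F (FreeAlgebra F G.Vp) :=
  Submodule.span F {x | ∃ u w, G.SRel v u j ∧ G.SRel v w j ∧
    x = G.vert F u - G.vert F w}

end LayeredGraph

/-- The elements of the sublattice generated by a family of subspaces. -/
inductive latGen {α : Type*} [Lattice α] (S : Set α) : α → Prop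
  | base {x} : x ∈ S → latGen S x
  | inf {x y} : latGen S x → latGen S y → latGen S (x ⊓ y)
  | sup {x y} : latGen S x → latGen S y → latGen S (x ⊔ y)

/-- A family of elements of a lattice is distributive if the sublattice
it generates is distributive. -/
def IsDistribFamily {α : Type*} [Lattice α] (S : Set α) : Prop :=
  ∀ x y z, latGen S x → latGen S y → latGen S z → x ⊓ (y ⊔ z) = (x ⊓ y) ⊔ (x ⊓ z)

/-- Backelin's criterion: a quadratic algebra `T(V)/(R)` (given by the degree-one
subspace `V` and the relation space `R ⊆ V⊗V` inside the tensor algebra) is Koszul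
iff for each `k` the collection of subspaces `V^i R V^(k-i)` generates a
distributive lattice. -/
def IsKoszulQuad (F : Type) [Field F] {A : Type} [Ring A] [Algebra F A]
    (W R : Submodule F A) : Prop :=
  ∀ k : ℕ, IsDistribFamily {X | ∃ i ≤ k, X = W ^ i * R * W ^ (k - i)}

end

/-- The linear map `I^{⊗j} ⊗ f ⊗ I^{⊗∞}` on the free algebra on `B` (viewed as the
tensor algebra on `V = F·B`), where `f : V → F` sends every basis element to `1`:
a basis word has its `j`-th letter deleted (with coefficient `1`) if it is long
enough, and is sent to `0` otherwise.  `delMap F B 0` is the map `g = f ⊗ I ⊗ ⋯`. -/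
noncomputable def delMap (F B : Type) [Field F] (j : ℕ) :
    FreeAlgebra F B →ₗ[F] FreeAlgebra F B :=
  (FreeAlgebra.basisFreeMonoid F B).constr ℕ fun w =>
    if j < (FreeMonoid.toList w).length
    then (((FreeMonoid.toList w).eraseIdx j).map (FreeAlgebra.ι F)).prod
    else 0



namespace AL42

variable {F B : Type} [Field F]

noncomputable def wd (F : Type) [Field F] {B : Type} (l : List B) : FreeAlgebra F B :=
  (l.map (FreeAlgebra.ι F)).prod

lemma wd_append (l₁ l₂ : List B) : wd F (l₁ ++ l₂) = wd F l₁ * wd F l₂ := by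
  simp [wd]

lemma wd_nil : wd F ([] : List B) = 1 := rfl

lemma basis_apply (w : FreeMonoid B) :
    FreeAlgebra.basisFreeMonoid F B w = wd F (FreeMonoid.toList w) := by
  simp only [FreeAlgebra.basisFreeMonoid, Module.Basis.map_apply, Finsupp.coe_basisSingleOne, wd]
  show FreeAlgebra.equivMonoidAlgebraFreeMonoid.symm (MonoidAlgebra.single w (1:F)) = _
  simp only [FreeAlgebra.equivMonoidAlgebraFreeMonoid, AlgEquiv.ofAlgHom_symm_apply,
    MonoidAlgebra.lift_single, one_smul, FreeMonoid.lift_apply]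

lemma basis_apply' (l : List B) :
    FreeAlgebra.basisFreeMonoid F B (FreeMonoid.ofList l) = wd F l := by
  rw [basis_apply]; rfl

/-- The span of words of length `n`. -/
noncomputable def Ws (F : Type) [Field F] {B : Type} (n : ℕ) : Submodule F (FreeAlgebra F B) :=
  Submodule.span F {x | ∃ l : List B, l.length = n ∧ x = wd F l}

lemma wd_mem {l : List B} {n : ℕ} (h : l.length = n) : wd F l ∈ Ws F n :=
  Submodule.subset_span ⟨l, h, rfl⟩

open Classical in
/-- The cut map extracting the middle of a word with prescribed prefix and suffix. -/
noncomputable def cut (F : Type) [Field F] {B : Type} (m : ℕ) (u v : List B) :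
    FreeAlgebra F B →ₗ[F] FreeAlgebra F B :=
  (FreeAlgebra.basisFreeMonoid F B).constr ℕ fun w =>
    if (∃ mid : List B, mid.length = m ∧ FreeMonoid.toList w = u ++ (mid ++ v))
    then wd F (((FreeMonoid.toList w).drop u.length).take m) else 0

open Classical in
lemma cut_wd (m : ℕ) (u v l : List B) :
    cut F m u v (wd F l) =
      if (∃ mid : List B, mid.length = m ∧ l = u ++ (mid ++ v))
      then wd F ((l.drop u.length).take m) else 0 := by
  rw [← basis_apply' l, cut, Module.Basis.constr_basis]
  rfl

lemma decomp_take {u mid v : List B} :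
    ((u ++ (mid ++ v)).drop u.length).take mid.length = mid := by
  rw [List.drop_left, List.take_left]

lemma cut_wd_of {m : ℕ} (u v mid : List B) (hm : mid.length = m) :
    cut F m u v (wd F (u ++ (mid ++ v))) = wd F mid := by
  rw [cut_wd, if_pos ⟨mid, hm, rfl⟩, ← hm, decomp_take]

lemma cut_wd_ne {m : ℕ} (u v l : List B)
    (h : ¬ ∃ mid : List B, mid.length = m ∧ l = u ++ (mid ++ v)) :
    cut F m u v (wd F l) = 0 := by
  rw [cut_wd, if_neg h]

/-- Uniqueness of decompositions with prescribed lengths. -/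
lemma decomp_unique {u u' mid mid' v v' : List B}
    (h : u ++ (mid ++ v) = u' ++ (mid' ++ v'))
    (hu : u.length = u'.length) (hm : mid.length = mid'.length) :
    u = u' ∧ mid = mid' ∧ v = v' := by
  obtain ⟨rfl, h2⟩ := List.append_inj h hu
  obtain ⟨rfl, rfl⟩ := List.append_inj h2 hm
  exact ⟨rfl, rfl, rfl⟩

end AL42
namespace AL42
variable {F B : Type} [Field F]

lemma cut_mul_eq {m : ℕ} (u v : List B) {s : FreeAlgebra F B} (hs : s ∈ Ws F m) :
    cut F m u v (wd F u * s * wd F v) = s := by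
  induction hs using Submodule.span_induction with
  | mem x hx =>
    obtain ⟨mid, hm, rfl⟩ := hx
    rw [← wd_append, ← wd_append, List.append_assoc, cut_wd_of u v mid hm]
  | zero => simp
  | add x y hx hy ihx ihy => rw [mul_add, add_mul, map_add, ihx, ihy]
  | smul c x hx ih => rw [mul_smul_comm, smul_mul_assoc, map_smul, ih]

lemma cut_mul_ne {m : ℕ} (u v u' v' : List B) (hu : u'.length = u.length)
    (hv : v'.length = v.length) (hne : ¬ (u' = u ∧ v' = v))
    {s : FreeAlgebra F B} (hs : s ∈ Ws F m) :
    cut F m u v (wd F u' * s * wd F v') = 0 := by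
  induction hs using Submodule.span_induction with
  | mem x hx =>
    obtain ⟨mid, hm, rfl⟩ := hx
    rw [← wd_append, ← wd_append, List.append_assoc]
    apply cut_wd_ne
    rintro ⟨mid', hm', heq⟩
    obtain ⟨h1, h2, h3⟩ := decomp_unique heq hu (by omega)
    exact hne ⟨h1, h3⟩
  | zero => simp
  | add x y hx hy ihx ihy => rw [mul_add, add_mul, map_add, ihx, ihy, add_zero]
  | smul c x hx ih => rw [mul_smul_comm, smul_mul_assoc, map_smul, ih, smul_zero]

lemma cut_mem_Ws (m : ℕ) (u v : List B) (x : FreeAlgebra F B) :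
    cut F m u v x ∈ Ws F m := by
  have hx : x ∈ Submodule.span F (Set.range (FreeAlgebra.basisFreeMonoid F B)) := by
    rw [Module.Basis.span_eq]; trivial
  induction hx using Submodule.span_induction with
  | mem x hx =>
    obtain ⟨w, rfl⟩ := hx
    rw [basis_apply, cut_wd]
    split
    · next h =>
      obtain ⟨mid, hm, heq⟩ := h
      rw [heq, ← hm, decomp_take]
      exact wd_mem rfl
    · exact Submodule.zero_mem _
  | zero => rw [map_zero]; exact Submodule.zero_mem _
  | add x y hx hy ihx ihy => rw [map_add]; exact Submodule.add_mem _ ihx ihy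
  | smul c x hx ih => rw [map_smul]; exact Submodule.smul_mem _ _ ih

lemma Ws_mul (a b : ℕ) : (Ws F a : Submodule F (FreeAlgebra F B)) * Ws F b = Ws F (a + b) := by
  rw [Ws, Ws, Submodule.span_mul_span]
  apply le_antisymm
  · rw [Submodule.span_le]
    rintro x ⟨p, ⟨l₁, hl₁, rfl⟩, q, ⟨l₂, hl₂, rfl⟩, rfl⟩
    {
      show wd F l₁ * wd F l₂ ∈ _
      rw [← wd_append]
      exact wd_mem (by rw [List.length_append, hl₁, hl₂]) }
  · rw [Ws, Submodule.span_le]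
    rintro x ⟨l, hl, rfl⟩
    have : wd F l = wd F (l.take a) * wd F (l.drop a) := by
      rw [← wd_append, List.take_append_drop]
    rw [this]
    exact Submodule.subset_span
      (Set.mul_mem_mul ⟨l.take a, by rw [List.length_take, hl]; omega, rfl⟩ ⟨l.drop a, by rw [List.length_drop, hl]; omega, rfl⟩)

end AL42
namespace AL42
variable {F B : Type} [Field F]

lemma list_split (l : List B) (i m : ℕ) :
    l = l.take i ++ ((l.drop i).take m ++ l.drop (i + m)) := by
  have h1 : l.drop (i + m) = (l.drop i).drop m := by
    rw [List.drop_drop, Nat.add_comm]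
  rw [h1, List.take_append_drop, List.take_append_drop]

lemma sum_cut_wd [Fintype B] (φ : FreeAlgebra F B →ₗ[F] FreeAlgebra F B) (i m j : ℕ)
    (l : List B) (hl : l.length = i + m + j) :
    (∑ u : List.Vector B i, ∑ v : List.Vector B j,
        wd F u.1 * φ (cut F m u.1 v.1 (wd F l)) * wd F v.1)
      = wd F (l.take i) * φ (wd F ((l.drop i).take m)) * wd F (l.drop (i + m)) := by
  have hu₀ : (l.take i).length = i := by rw [List.length_take]; omega
  have hv₀ : (l.drop (i + m)).length = j := by rw [List.length_drop]; omega
  have hm₀ : ((l.drop i).take m).length = m := by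
    rw [List.length_take, List.length_drop]; omega
  have key : ∀ (u : List.Vector B i) (v : List.Vector B j), ¬(u.1 = l.take i ∧ v.1 = l.drop (i + m)) →
      cut F m u.1 v.1 (wd F l) = 0 := by
    intro u v huv
    apply cut_wd_ne
    rintro ⟨mid, hm, heq⟩
    have heq2 : u.1 ++ (mid ++ v.1) = l.take i ++ ((l.drop i).take m ++ l.drop (i + m)) := by
      rw [← heq, ← list_split]
    obtain ⟨h1, h2, h3⟩ := decomp_unique heq2 (u.2.trans hu₀.symm) (by omega)
    exact huv ⟨h1, h3⟩
  have hc : cut F m (l.take i) (l.drop (i + m)) (wd F l) = wd F ((l.drop i).take m) := by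
    have h2 := cut_wd_of (F := F) (l.take i) (l.drop (i + m)) ((l.drop i).take m) hm₀
    rw [← list_split] at h2
    exact h2
  rw [Finset.sum_eq_single_of_mem (show List.Vector B i from ⟨l.take i, hu₀⟩) (Finset.mem_univ _)]
  · rw [Finset.sum_eq_single_of_mem (show List.Vector B j from ⟨l.drop (i + m), hv₀⟩)
      (Finset.mem_univ _)]
    · show wd F (l.take i) * φ (cut F m (l.take i) (l.drop (i + m)) (wd F l))
          * wd F (l.drop (i + m)) = _
      rw [hc]
    · intro v _ hv
      rw [key _ _ (by simp only [ne_eq]; rintro ⟨-, h⟩; exact hv (Subtype.ext h)),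
        map_zero, mul_zero, zero_mul]
  · intro u _ hu
    apply Finset.sum_eq_zero
    intro v _
    rw [key _ _ (by rintro ⟨h, -⟩; exact hu (Subtype.ext h)), map_zero, mul_zero, zero_mul]

lemma reconstruct [Fintype B] (i m j : ℕ) {x : FreeAlgebra F B} (hx : x ∈ Ws F (i + m + j)) :
    x = ∑ u : List.Vector B i, ∑ v : List.Vector B j, wd F u.1 * cut F m u.1 v.1 x * wd F v.1 := by
  induction hx using Submodule.span_induction with
  | mem x hx =>
    obtain ⟨l, hl, rfl⟩ := hx
    have h := sum_cut_wd (F := F) (LinearMap.id) i m j l hl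
    simp only [LinearMap.id_apply] at h
    rw [h, ← wd_append, ← wd_append, List.append_assoc, ← list_split]
  | zero => simp
  | add x y hx hy ihx ihy =>
    simp only [map_add, mul_add, add_mul, Finset.sum_add_distrib]
    rw [← ihx, ← ihy]
  | smul c x hx ih =>
    simp only [map_smul, mul_smul_comm, smul_mul_assoc, ← Finset.smul_sum]
    rw [← ih]

end AL42

namespace AL42
variable {F B : Type} [Field F]

lemma mem_sandwich [Fintype B] (m i j : ℕ) (X : Submodule F (FreeAlgebra F B))
    (hX : X ≤ Ws F m) (x : FreeAlgebra F B) :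
    x ∈ Ws F i * X * Ws F j ↔
      x ∈ Ws F (i + m + j) ∧
        ∀ (u : List.Vector B i) (v : List.Vector B j), cut F m u.1 v.1 x ∈ X := by
  constructor
  · intro hx
    refine ⟨?_, fun u v => ?_⟩
    · have hle : Ws F i * X * Ws F j ≤ Ws F (i + m + j) := by
        rw [← Ws_mul, ← Ws_mul]
        exact mul_le_mul' (mul_le_mul' le_rfl hX) le_rfl
      exact hle hx
    · have hle : Ws F i * X * Ws F j ≤ X.comap (cut F m u.1 v.1) := by
        rw [Submodule.mul_le]
        intro p hp c hc
        induction hc using Submodule.span_induction with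
        | mem c hcm =>
          obtain ⟨v', hv', rfl⟩ := hcm
          refine Submodule.mul_induction_on hp ?_ ?_
          · intro a ha s hs
            induction ha using Submodule.span_induction with
            | mem a ham =>
              obtain ⟨u', hu', rfl⟩ := ham
              simp only [Submodule.mem_comap]
              by_cases h : u' = u.1 ∧ v' = v.1
              · rw [h.1, h.2, cut_mul_eq u.1 v.1 (hX hs)]; exact hs
              · rw [cut_mul_ne u.1 v.1 u' v' (hu'.trans u.2.symm) (hv'.trans v.2.symm) h (hX hs)]
                exact X.zero_mem
            | zero => simp only [Submodule.mem_comap, zero_mul, map_zero]; exact X.zero_mem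
            | add a b hha hhb iha ihb =>
              simp only [Submodule.mem_comap, add_mul, map_add] at *
              exact X.add_mem iha ihb
            | smul c' a hha ih =>
              simp only [Submodule.mem_comap, smul_mul_assoc, map_smul] at *
              exact X.smul_mem _ ih
          · intro p q hp' hq'
            simp only [Submodule.mem_comap, add_mul, map_add] at *
            exact X.add_mem hp' hq'
        | zero => simp only [Submodule.mem_comap, mul_zero, map_zero]; exact X.zero_mem
        | add c₁ c₂ h₁ h₂ ih₁ ih₂ =>
          simp only [Submodule.mem_comap, mul_add, map_add] at *
          exact X.add_mem ih₁ ih₂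
        | smul c' c₁ h₁ ih =>
          simp only [Submodule.mem_comap, mul_smul_comm, map_smul] at *
          exact X.smul_mem _ ih
      exact hle hx
  · rintro ⟨hdeg, hcut⟩
    have h := reconstruct i m j hdeg
    rw [h]
    refine Submodule.sum_mem _ fun u _ => Submodule.sum_mem _ fun v _ => ?_
    exact Submodule.mul_mem_mul (Submodule.mul_mem_mul (wd_mem u.2) (hcut u v)) (wd_mem v.2)

lemma sandwich_inf [Fintype B] (m i j : ℕ) (X Y : Submodule F (FreeAlgebra F B))
    (hX : X ≤ Ws F m) (hY : Y ≤ Ws F m) :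
    Ws F i * (X ⊓ Y) * Ws F j = (Ws F i * X * Ws F j) ⊓ (Ws F i * Y * Ws F j) := by
  ext x
  simp only [Submodule.mem_inf, mem_sandwich m i j _ (inf_le_left.trans hX),
    mem_sandwich m i j X hX, mem_sandwich m i j Y hY]
  constructor
  · rintro ⟨hd, hc⟩
    exact ⟨⟨hd, fun u v => (hc u v).1⟩, ⟨hd, fun u v => (hc u v).2⟩⟩
  · rintro ⟨⟨hd, hc1⟩, ⟨-, hc2⟩⟩
    exact ⟨hd, fun u v => ⟨hc1 u v, hc2 u v⟩⟩

lemma delMap_wd (n : ℕ) (l : List B) :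
    delMap F B n (wd F l) = if n < l.length then wd F (l.eraseIdx n) else 0 := by
  rw [← basis_apply' l, delMap, Module.Basis.constr_basis]
  rfl

lemma delMap0_mem {x : FreeAlgebra F B} (hx : x ∈ Ws F 1) : delMap F B 0 x ∈ Ws F 0 := by
  induction hx using Submodule.span_induction with
  | mem x hxm =>
    obtain ⟨l, hl, rfl⟩ := hxm
    rw [delMap_wd, if_pos (by omega)]
    exact wd_mem (by rw [List.length_eraseIdx]; simp [hl])
  | zero => rw [map_zero]; exact Submodule.zero_mem _
  | add a b ha hb iha ihb => rw [map_add]; exact Submodule.add_mem _ iha ihb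
  | smul c a ha ih => rw [map_smul]; exact Submodule.smul_mem _ _ ih

end AL42
namespace AL42
variable {F B : Type} [Field F]

lemma delMap_eq_sum [Fintype B] (i j : ℕ) {x : FreeAlgebra F B}
    (hx : x ∈ Ws F (i + 1 + 1 + j)) :
    delMap F B (i + 1) x = ∑ u : List.Vector B (i + 1), ∑ v : List.Vector B j,
      wd F u.1 * delMap F B 0 (cut F 1 u.1 v.1 x) * wd F v.1 := by
  induction hx using Submodule.span_induction with
  | mem x hxm =>
    obtain ⟨l, hl, rfl⟩ := hxm
    rw [sum_cut_wd (delMap F B 0) (i + 1) 1 j l (by omega)]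
    have hmid : ((l.drop (i + 1)).take 1).length = 1 := by
      rw [List.length_take, List.length_drop]; omega
    have h1 : delMap F B 0 (wd F ((l.drop (i + 1)).take 1)) = 1 := by
      rw [delMap_wd, if_pos (by omega)]
      have hz : ((l.drop (i + 1)).take 1).eraseIdx 0 = [] := by
        rw [← List.length_eq_zero_iff, List.length_eraseIdx]
        simp [hmid]
      rw [hz, wd_nil]
    rw [h1, mul_one, ← wd_append, delMap_wd, if_pos (by omega),
      List.eraseIdx_eq_take_drop_succ]
  | zero => simp
  | add a b ha hb iha ihb =>
    simp only [map_add, mul_add, add_mul, Finset.sum_add_distrib]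
    rw [← iha, ← ihb]
  | smul c a ha ih =>
    simp only [map_smul, mul_smul_comm, smul_mul_assoc, ← Finset.smul_sum]
    rw [← ih]

lemma L8 [Fintype B] (i j : ℕ) :
    Ws F (i + 1) * ((Ws F 1 : Submodule F (FreeAlgebra F B)) ⊓ LinearMap.ker (delMap F B 0))
        * Ws F j
      = Ws F (i + 1 + 1 + j) ⊓ LinearMap.ker (delMap F B (i + 1)) := by
  classical
  ext x
  rw [mem_sandwich 1 (i + 1) j _ inf_le_left, Submodule.mem_inf]
  constructor
  · rintro ⟨hdeg, hcut⟩
    refine ⟨hdeg, ?_⟩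
    rw [LinearMap.mem_ker, delMap_eq_sum i j hdeg]
    refine Finset.sum_eq_zero fun u _ => Finset.sum_eq_zero fun v _ => ?_
    have h := (Submodule.mem_inf.mp (hcut u v)).2
    rw [LinearMap.mem_ker] at h
    rw [h, mul_zero, zero_mul]
  · rintro ⟨hdeg, hker⟩
    refine ⟨hdeg, fun u v => ?_⟩
    refine Submodule.mem_inf.mpr ⟨cut_mem_Ws 1 u.1 v.1 x, LinearMap.mem_ker.mpr ?_⟩
    have hsum := delMap_eq_sum i j hdeg
    rw [LinearMap.mem_ker.mp hker] at hsum
    have happ := congrArg (cut F 0 u.1 v.1) hsum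
    rw [map_zero, map_sum] at happ
    have hterm : ∀ (u' : List.Vector B (i + 1)) (v' : List.Vector B j),
        cut F 0 u.1 v.1 (wd F u'.1 * delMap F B 0 (cut F 1 u'.1 v'.1 x) * wd F v'.1)
          = if u' = u ∧ v' = v then delMap F B 0 (cut F 1 u'.1 v'.1 x) else 0 := by
      intro u' v'
      have ht : delMap F B 0 (cut F 1 u'.1 v'.1 x) ∈ Ws F 0 :=
        delMap0_mem (cut_mem_Ws _ _ _ _)
      by_cases h : u' = u ∧ v' = v
      · obtain ⟨rfl, rfl⟩ := h
        rw [if_pos ⟨rfl, rfl⟩, cut_mul_eq u'.1 v'.1 ht]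
      · rw [if_neg h]
        exact cut_mul_ne u.1 v.1 u'.1 v'.1 (u'.2.trans u.2.symm) (v'.2.trans v.2.symm)
          (fun hh => h ⟨Subtype.ext hh.1, Subtype.ext hh.2⟩) ht
    simp only [map_sum, hterm] at happ
    rw [Finset.sum_eq_single_of_mem u (Finset.mem_univ _) (fun u' _ hu' =>
        Finset.sum_eq_zero fun v' _ => if_neg fun hh => hu' hh.1),
      Finset.sum_eq_single_of_mem v (Finset.mem_univ _) (fun v' _ hv' =>
        if_neg fun hh => hv' hh.2), if_pos ⟨rfl, rfl⟩] at happ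
    exact happ.symm

end AL42
namespace AL42
variable {F B : Type} [Field F]

lemma Ws_one : (Ws F 1 : Submodule F (FreeAlgebra F B))
    = Submodule.span F (Set.range (FreeAlgebra.ι F)) := by
  rw [Ws]
  congr 1
  ext x
  constructor
  · rintro ⟨l, hl, rfl⟩
    match l, hl with
    | [b], _ => exact ⟨b, by simp [wd]⟩
  · rintro ⟨b, rfl⟩
    exact ⟨[b], rfl, by simp [wd]⟩

lemma Ws_zero : (Ws F 0 : Submodule F (FreeAlgebra F B)) = 1 := by
  rw [Ws, Submodule.one_eq_span]
  congr 1
  ext x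
  constructor
  · rintro ⟨l, hl, rfl⟩
    match l, hl with
    | [], _ => simp [wd_nil]
  · rintro rfl
    exact ⟨[], rfl, rfl⟩


theorem main (F B : Type) [Field F] [Fintype B]
    (W : Submodule F (FreeAlgebra F B))
    (hW : W = Submodule.span F (Set.range (FreeAlgebra.ι F)))
    (P : Submodule F (FreeAlgebra F B)) (hP : P ≤ W * W)
    (R : Submodule F (FreeAlgebra F B))
    (hR : R = P ⊓ (W * (W ⊓ LinearMap.ker (delMap F B 0))))
    (k : ℕ) (hk : 2 ≤ k) :
    (⨅ i : Fin (k - 1), W ^ (i : ℕ) * R * W ^ (k - 2 - (i : ℕ))) =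
      (⨅ i : Fin (k - 1), W ^ (i : ℕ) * P * W ^ (k - 2 - (i : ℕ))) ⊓
      (⨅ i : Fin (k - 1), (W ^ k ⊓ LinearMap.ker (delMap F B ((i : ℕ) + 1)))) := by
  have hW1 : W = Ws F 1 := by rw [hW, Ws_one]
  have hWn : ∀ n, W ^ n = Ws F n := by
    intro n
    induction n with
    | zero => rw [pow_zero, Ws_zero]
    | succ n ih => rw [pow_succ, ih, hW1, Ws_mul]
  have hPle : P ≤ Ws F 2 := by
    have h := hP
    rw [hW1, Ws_mul] at h
    exact h
  have hZle : W * (W ⊓ LinearMap.ker (delMap F B 0)) ≤ Ws F 2 := by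
    rw [hW1]
    calc Ws F 1 * (Ws F 1 ⊓ LinearMap.ker (delMap F B 0))
        ≤ Ws F 1 * Ws F 1 := mul_le_mul' le_rfl inf_le_left
      _ = Ws F 2 := Ws_mul 1 1
  have key : ∀ i : Fin (k - 1), W ^ (i : ℕ) * R * W ^ (k - 2 - (i : ℕ)) =
      (W ^ (i : ℕ) * P * W ^ (k - 2 - (i : ℕ))) ⊓
        (W ^ k ⊓ LinearMap.ker (delMap F B ((i : ℕ) + 1))) := by
    intro i
    have hak : (i : ℕ) < k - 1 := i.isLt
    rw [hR, hWn, hWn, hWn k, sandwich_inf 2 _ _ P _ hPle hZle]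
    congr 1
    rw [hW1, ← mul_assoc, Ws_mul]
    rw [L8 (i : ℕ) (k - 2 - (i : ℕ))]
    congr 2
    omega
  rw [iInf_congr key, iInf_inf_eq]


end AL42

/-- abstract Lemma 4.2: let `V` be finite dimensional with basis `B`,
`f : V → F` the functional sending each basis vector to `1`, `P ⊆ V⊗V` a subspace
(playing the role of `M^⊥`), and `R = P ∩ (V ⊗ ker f)`.  Then for `k ≥ 2`,
`⋂ᵢ V^i R V^(k-i-2) = (⋂ᵢ V^i P V^(k-i-2)) ∩ (⋂ᵢ ker(I^(i+1) ⊗ f ⊗ I^(k-i-2)))`. -/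
theorem abstract_lemma_4_2 (F B : Type) [Field F] [Fintype B]
    (W : Submodule F (FreeAlgebra F B))
    (hW : W = Submodule.span F (Set.range (FreeAlgebra.ι F)))
    (P : Submodule F (FreeAlgebra F B)) (hP : P ≤ W * W)
    (R : Submodule F (FreeAlgebra F B))
    (hR : R = P ⊓ (W * (W ⊓ LinearMap.ker (delMap F B 0))))
    (k : ℕ) (hk : 2 ≤ k) :
    (⨅ i : Fin (k - 1), W ^ (i : ℕ) * R * W ^ (k - 2 - (i : ℕ))) =
      (⨅ i : Fin (k - 1), W ^ (i : ℕ) * P * W ^ (k - 2 - (i : ℕ))) ⊓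
      (⨅ i : Fin (k - 1), (W ^ k ⊓ LinearMap.ker (delMap F B ((i : ℕ) + 1)))) :=
  AL42.main F B W hW P hP R hR k hk
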